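/- Let β ∈ C^N and k ∈ Z^N with k+β ≠ 0, N = 2n, 1 ≤ p ≤ n. Every element of (k+β) ∧ Λ^{p-1}C^N that lies in the kernel of the contraction map θ_p : Λ^p C^N → Λ^{p-2}C^N is of the form (k+β)(\overline{k+β})^T w for some w ∈ ker θ_p. (For p=1, ker θ_1 means all of C^N.) In other words, W^{k,β}(V(ω_p)) = W_min^{k,β}(V(ω_p)). -/

import Mathlib

open Matrix

/-- The standard symplectic matrix `J` for `N = 2n`. -/
noncomputable def Jmat (n : ℕ) : Matrix (Fin n ⊕ Fin n) (Fin n ⊕ Fin n) ℂ :=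
  Matrix.fromBlocks 0 1 (-1) 0

/-- The wedge `v_1 ∧ ... ∧ v_p` inside the exterior algebra. -/
noncomputable def wedge (n : ℕ) {p : ℕ} (v : Fin p → (Fin n ⊕ Fin n → ℂ)) :
    ExteriorAlgebra ℂ (Fin n ⊕ Fin n → ℂ) :=
  ((List.ofFn v).map (ExteriorAlgebra.ι ℂ)).prod

/-- The contraction `θ_p(v_1 ∧ ... ∧ v_p) = Σ_{i<j} (-1)^{i+j-1} (v̄_i|v_j)
v_1 ∧ ... ∧ v̂_i ∧ ... ∧ v̂_j ∧ ... ∧ v_p` (0-based indices; for `p = 1` this is `0`, so its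
kernel is all of `ℂ^N`). -/
noncomputable def contraction (n : ℕ) {p : ℕ} (v : Fin p → (Fin n ⊕ Fin n → ℂ)) :
    ExteriorAlgebra ℂ (Fin n ⊕ Fin n → ℂ) :=
  ∑ i : Fin p, ∑ j : Fin p,
    if i < j then
      ((-1 : ℂ) ^ (i.val + j.val + 1) * ((Jmat n).mulVec (v i) ⬝ᵥ v j)) •
        ((((List.ofFn v).map (ExteriorAlgebra.ι ℂ)).eraseIdx j.val).eraseIdx i.val).prod
    else 0


/-!
Write `α = k + β`, `ω(u, v) = (J u) ⬝ᵥ v` and `φ = ω(α, ·)`. The derivation `D` is `α ∧ (φ ⌋ ·)`,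
and `θ_p` is the degree-`p` part of one operator `Θ` on the whole exterior algebra which commutes
with every contraction and satisfies `Θ (u ∧ z) = u ∧ Θ z + ω(u, ·) ⌋ z`.
Pick `b` with `ω(α, b) = 1` and put `ψ = -ω(b, ·)`, so `ψ(α) = 1`. If `α ∧ x = 0` then
`x = α ∧ y` with `y = ψ ⌋ x`, and `ψ ⌋ y = 0`. Contracting `0 = Θ x = α ∧ Θ y + φ ⌋ y` with `ψ`
gives `Θ y = 0`, hence `φ ⌋ y = 0`. So `w = b ∧ y` has `Θ w = -ψ ⌋ y = 0` and
`D w = α ∧ (y - b ∧ φ ⌋ y) = x`.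
-/

open CliffordAlgebra (contractLeft involute contractLeft_ι_mul contractLeft_one)

namespace ExteriorAlgebra

variable {R M : Type*} [CommRing R] [AddCommGroup M] [Module R M]

theorem ι_mul_mem_exteriorPower {p : ℕ} (a : M) {x : ExteriorAlgebra R M}
    (hx : x ∈ ⋀[R]^p M) : ι R a * x ∈ ⋀[R]^(p + 1) M := by
  rw [exteriorPower, pow_succ']
  exact Submodule.mul_mem_mul (LinearMap.mem_range_self _ a) hx

theorem list_prod_map_ι_mem_exteriorPower (l : List M) :
    (l.map (ι R)).prod ∈ ⋀[R]^l.length M := by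
  induction l with
  | nil => exact Submodule.one_le.mp le_rfl
  | cons a l ih => exact ι_mul_mem_exteriorPower a ih

theorem contractLeft_prod_ofFn_map_ι (f : Module.Dual R M) :
    ∀ {p : ℕ} (v : Fin p → M), contractLeft f ((List.ofFn v).map (ι R)).prod =
      ∑ i : Fin p, ((-1 : R) ^ (i : ℕ) * f (v i)) • (((List.ofFn v).map (ι R)).eraseIdx i).prod
  | 0, v => by simp [contractLeft_one]
  | p + 1, v => by
    rw [List.ofFn_succ, List.map_cons, List.prod_cons, contractLeft_ι_mul,
      contractLeft_prod_ofFn_map_ι f, Fin.sum_univ_succ, Finset.mul_sum, sub_eq_add_neg,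
      ← Finset.sum_neg_distrib]
    refine congrArg₂ (· + ·) (by simp) (Finset.sum_congr rfl fun i _ => ?_)
    rw [Fin.val_succ, List.eraseIdx_cons_succ, List.prod_cons, mul_smul_comm, ← neg_smul]
    congr 1
    ring

theorem ιMulti_eq_prod_map_ι {p : ℕ} (v : Fin p → M) :
    ιMulti R p v = ((List.ofFn v).map (ι R)).prod := by
  rw [ιMulti_apply, List.map_ofFn]
  rfl

theorem contractLeft_mem_exteriorPower (f : Module.Dual R M) {p : ℕ} {x : ExteriorAlgebra R M}
    (hx : x ∈ ⋀[R]^(p + 1) M) : contractLeft f x ∈ ⋀[R]^p M := by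
  rw [← ιMulti_span_fixedDegree] at hx
  induction hx using Submodule.span_induction with
  | mem _ h =>
    obtain ⟨v, rfl⟩ := h
    rw [ιMulti_eq_prod_map_ι, contractLeft_prod_ofFn_map_ι]
    refine Submodule.sum_mem _ fun i _ => Submodule.smul_mem _ _ ?_
    have hlen : ((List.ofFn v).eraseIdx i).length = p := by
      rw [List.length_eraseIdx_of_lt (by simp [i.isLt]), List.length_ofFn, Nat.add_sub_cancel]
    have h := list_prod_map_ι_mem_exteriorPower (R := R) ((List.ofFn v).eraseIdx i)
    rwa [hlen, ← List.eraseIdx_map] at h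
  | zero => simp
  | add _ _ _ _ ha hb => rw [map_add]; exact add_mem ha hb
  | smul c _ _ ha => rw [map_smul]; exact Submodule.smul_mem _ c ha

theorem contractLeft_mul (f : Module.Dual R M) (a b : ExteriorAlgebra R M) :
    contractLeft f (a * b) = contractLeft f a * b + involute a * contractLeft f b := by
  induction a using CliffordAlgebra.induction generalizing b with
  | algebraMap r =>
    rw [CliffordAlgebra.contractLeft_algebraMap_mul, CliffordAlgebra.contractLeft_algebraMap,
      zero_mul, zero_add, AlgHom.commutes, ← Algebra.smul_def]
  | ι m =>
    rw [contractLeft_ι_mul, CliffordAlgebra.contractLeft_ι, CliffordAlgebra.involute_ι,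
      ← Algebra.smul_def, sub_eq_add_neg, neg_mul]
  | mul a₁ a₂ ih₁ ih₂ =>
    rw [mul_assoc, ih₁, ih₂, ih₁ a₂, map_mul]
    noncomm_ring
  | add a₁ a₂ ih₁ ih₂ =>
    rw [add_mul, map_add, ih₁, ih₂, map_add, map_add, add_mul, add_mul]
    abel

theorem ι_mul_involute (a : M) (z : ExteriorAlgebra R M) : ι R a * involute z = z * ι R a := by
  induction z using CliffordAlgebra.induction with
  | algebraMap r => rw [AlgHom.commutes, Algebra.commutes]
  | ι m =>
    rw [CliffordAlgebra.involute_ι, mul_neg]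
    exact neg_eq_of_add_eq_zero_right (ι_add_mul_swap a m)
  | mul x y hx hy => rw [map_mul, ← mul_assoc, hx, mul_assoc, hy, ← mul_assoc]
  | add x y hx hy => rw [map_add, mul_add, add_mul, hx, hy]

theorem derivation_eq_ι_mul_contractLeft (D : ExteriorAlgebra R M →ₗ[R] ExteriorAlgebra R M)
    (hD : ∀ x y, D (x * y) = D x * y + x * D y) (f : Module.Dual R M) (a : M)
    (hDι : ∀ u, D (ι R u) = f u • ι R a) (z : ExteriorAlgebra R M) :
    D z = ι R a * contractLeft f z := by
  induction z using CliffordAlgebra.induction with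
  | algebraMap r =>
    have hD1 : D 1 = 0 := by simpa using hD 1 1
    rw [Algebra.algebraMap_eq_smul_one, map_smul, hD1, smul_zero, map_smul, contractLeft_one,
      smul_zero, mul_zero]
  | ι m =>
    rw [hDι, CliffordAlgebra.contractLeft_ι, ← Algebra.commutes, ← Algebra.smul_def]
  | mul x y hx hy =>
    rw [hD, hx, hy, contractLeft_mul, mul_add]
    simp only [← mul_assoc, ι_mul_involute]
  | add x y hx hy => rw [map_add, hx, hy, map_add, mul_add]

theorem ι_mul_contractLeft_eq_self_of_ι_mul_eq_zero {f : Module.Dual R M} {a : M}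
    {x : ExteriorAlgebra R M} (hfa : f a = 1) (hax : ι R a * x = 0) :
    ι R a * contractLeft f x = x := by
  have h := contractLeft_ι_mul a x (d := f)
  rw [hax, map_zero, hfa, one_smul] at h
  exact (sub_eq_zero.mp h.symm).symm

theorem sum_contractLeft_comp_contractLeft_ι_mul {κ : Type*} [Fintype κ]
    (f g : κ → Module.Dual R M) (u : M) (z : ExteriorAlgebra R M) :
    (∑ r, contractLeft (f r) ∘ₗ contractLeft (g r)) (ι R u * z) =
      ι R u * (∑ r, contractLeft (f r) ∘ₗ contractLeft (g r)) z +
        contractLeft (∑ r, (g r u • f r - f r u • g r)) z := by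
  simp only [LinearMap.sum_apply, LinearMap.comp_apply, contractLeft_ι_mul, map_sub, map_smul,
    map_sum, LinearMap.sub_apply, LinearMap.smul_apply, Finset.mul_sum, ← Finset.sum_add_distrib]
  refine Finset.sum_congr rfl fun r _ => ?_
  abel

section ContractionOperator

variable (ω : M → Module.Dual R M) (T : ExteriorAlgebra R M →ₗ[R] ExteriorAlgebra R M)

theorem map_eq_zero_and_contractLeft_eq_zero_of_map_ι_mul_eq_zero
    (hTι : ∀ u z, T (ι R u * z) = ι R u * T z + contractLeft (ω u) z)
    (hTcomm : ∀ f z, contractLeft f (T z) = T (contractLeft f z))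
    {a : M} {ψ : Module.Dual R M} (hψa : ψ a = 1) {y : ExteriorAlgebra R M}
    (hψy : contractLeft ψ y = 0) (hay : T (ι R a * y) = 0) :
    T y = 0 ∧ contractLeft (ω a) y = 0 := by
  have hsum := hTι a y
  rw [hay] at hsum
  have hTy : T y = 0 := by
    have h := congrArg (contractLeft ψ) hsum
    rwa [map_zero, map_add, contractLeft_ι_mul, hψa, one_smul, hTcomm, hψy, map_zero, mul_zero,
      sub_zero, CliffordAlgebra.contractLeft_comm, hψy, map_zero, neg_zero, add_zero,
      eq_comm] at h
  refine ⟨hTy, ?_⟩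
  rwa [hTy, mul_zero, zero_add, eq_comm] at hsum

theorem exists_mem_exteriorPower_map_eq_zero_ι_mul_contractLeft_eq
    (hTι : ∀ u z, T (ι R u * z) = ι R u * T z + contractLeft (ω u) z)
    (hTcomm : ∀ f z, contractLeft f (T z) = T (contractLeft f z))
    {a b : M} (hab : ω a b = 1) (hba : ω b a = -1) {p : ℕ} {x : ExteriorAlgebra R M}
    (hx : x ∈ ⋀[R]^(p + 1) M) (hax : ι R a * x = 0) (hTx : T x = 0) :
    ∃ w ∈ ⋀[R]^(p + 1) M, T w = 0 ∧ ι R a * contractLeft (ω a) w = x := by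
  set y := contractLeft (-ω b) x
  have hψa : (-ω b) a = 1 := by rw [LinearMap.neg_apply, hba, neg_neg]
  have hxy : ι R a * y = x := ι_mul_contractLeft_eq_self_of_ι_mul_eq_zero hψa hax
  have hψy : contractLeft (-ω b) y = 0 := CliffordAlgebra.contractLeft_contractLeft _ _
  obtain ⟨hTy, hωy⟩ := map_eq_zero_and_contractLeft_eq_zero_of_map_ι_mul_eq_zero ω T hTι hTcomm
    hψa hψy (hxy ▸ hTx)
  refine ⟨ι R b * y, ι_mul_mem_exteriorPower b (contractLeft_mem_exteriorPower _ hx), ?_, ?_⟩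
  · rw [hTι, hTy, mul_zero, zero_add, ← neg_neg (ω b), map_neg, LinearMap.neg_apply, hψy,
      neg_zero]
  · rw [contractLeft_ι_mul, hab, one_smul, hωy, mul_zero, sub_zero, hxy]

end ContractionOperator

end ExteriorAlgebra

section Symplectic

open ExteriorAlgebra

variable {n : ℕ}

theorem Jmat_transpose (n : ℕ) : (Jmat n)ᵀ = -Jmat n := by
  simp [Jmat, fromBlocks_transpose, fromBlocks_neg]

theorem Jmat_mul_self (n : ℕ) : Jmat n * Jmat n = -1 := by
  simp [Jmat, fromBlocks_multiply, ← fromBlocks_one, fromBlocks_neg]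

noncomputable def symplecticForm (n : ℕ) (u : Fin n ⊕ Fin n → ℂ) :
    Module.Dual ℂ (Fin n ⊕ Fin n → ℂ) where
  toFun v := Jmat n *ᵥ u ⬝ᵥ v
  map_add' := dotProduct_add _
  map_smul' c v := dotProduct_smul c _ v

@[simp]
theorem symplecticForm_apply (u v : Fin n ⊕ Fin n → ℂ) :
    symplecticForm n u v = Jmat n *ᵥ u ⬝ᵥ v := rfl

theorem symplecticForm_swap (u v : Fin n ⊕ Fin n → ℂ) :
    symplecticForm n u v = -symplecticForm n v u := by
  rw [symplecticForm_apply, symplecticForm_apply, dotProduct_comm, dotProduct_mulVec,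
    ← mulVec_transpose, Jmat_transpose, neg_mulVec, neg_dotProduct]

theorem exists_symplecticForm_eq_one {a : Fin n ⊕ Fin n → ℂ} (ha : a ≠ 0) :
    ∃ b, symplecticForm n a b = 1 := by
  have hJa : Jmat n *ᵥ a ≠ 0 := fun h => ha <| by
    simpa [mulVec_mulVec, Jmat_mul_self, neg_mulVec] using congrArg (Jmat n *ᵥ ·) h
  obtain ⟨r, hr⟩ := Function.ne_iff.mp hJa
  exact ⟨((Jmat n *ᵥ a) r)⁻¹ • Pi.single r 1, by simpa using inv_mul_cancel₀ hr⟩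

/-- `θ_p` on all degrees at once: every pair of slots is contracted twice, hence the `½`. -/
noncomputable def symplecticContraction (n : ℕ) :
    ExteriorAlgebra ℂ (Fin n ⊕ Fin n → ℂ) →ₗ[ℂ] ExteriorAlgebra ℂ (Fin n ⊕ Fin n → ℂ) :=
  -(2⁻¹ : ℂ) • ∑ r, contractLeft ((LinearMap.proj r).comp (Jmat n).mulVecLin) ∘ₗ
    contractLeft (LinearMap.proj r)

theorem symplecticContraction_ι_mul (u : Fin n ⊕ Fin n → ℂ)
    (z : ExteriorAlgebra ℂ (Fin n ⊕ Fin n → ℂ)) :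
    symplecticContraction n (ι ℂ u * z) =
      ι ℂ u * symplecticContraction n z + contractLeft (symplecticForm n u) z := by
  have hω : ∑ r, (LinearMap.proj (R := ℂ) (φ := fun _ => ℂ) r u •
        (LinearMap.proj r).comp (Jmat n).mulVecLin -
      (LinearMap.proj r).comp (Jmat n).mulVecLin u • LinearMap.proj r) =
      -(2 : ℂ) • symplecticForm n u := by
    refine LinearMap.ext fun w => ?_
    simp only [LinearMap.sum_apply, LinearMap.sub_apply, LinearMap.smul_apply,
      LinearMap.proj_apply, LinearMap.comp_apply, mulVecLin_apply, smul_eq_mul,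
      Finset.sum_sub_distrib]
    change u ⬝ᵥ Jmat n *ᵥ w - Jmat n *ᵥ u ⬝ᵥ w = _
    rw [dotProduct_comm, ← symplecticForm_apply, ← symplecticForm_apply, symplecticForm_swap w]
    ring
  rw [symplecticContraction, LinearMap.smul_apply, sum_contractLeft_comp_contractLeft_ι_mul, hω,
    map_smul, LinearMap.smul_apply, smul_add, smul_smul, LinearMap.smul_apply, mul_smul_comm]
  norm_num

theorem contractLeft_symplecticContraction (f : Module.Dual ℂ (Fin n ⊕ Fin n → ℂ))
    (z : ExteriorAlgebra ℂ (Fin n ⊕ Fin n → ℂ)) :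
    contractLeft f (symplecticContraction n z) = symplecticContraction n (contractLeft f z) := by
  simp only [symplecticContraction, LinearMap.smul_apply, LinearMap.sum_apply, map_smul, map_sum,
    LinearMap.comp_apply, CliffordAlgebra.contractLeft_comm f, map_neg, neg_neg]

theorem wedge_succ {p : ℕ} (v : Fin (p + 1) → Fin n ⊕ Fin n → ℂ) :
    wedge n v = ι ℂ (v 0) * wedge n (fun i => v i.succ) := by
  rw [wedge, List.ofFn_succ, List.map_cons, List.prod_cons, wedge]

theorem contraction_succ {p : ℕ} (v : Fin (p + 1) → Fin n ⊕ Fin n → ℂ) :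
    contraction n v = contractLeft (symplecticForm n (v 0)) (wedge n fun i => v i.succ) +
      ι ℂ (v 0) * contraction n (fun i => v i.succ) := by
  rw [wedge, contractLeft_prod_ofFn_map_ι, contraction, contraction, Fin.sum_univ_succ,
    Finset.mul_sum, List.ofFn_succ, List.map_cons]
  congr 1
  · rw [Fin.sum_univ_succ]
    simp [pow_succ]
  · refine Finset.sum_congr rfl fun i _ => ?_
    rw [Fin.sum_univ_succ, Finset.mul_sum]
    simp [pow_succ, pow_add]

theorem symplecticContraction_wedge :
    ∀ {p : ℕ} (v : Fin p → Fin n ⊕ Fin n → ℂ),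
      symplecticContraction n (wedge n v) = contraction n v
  | 0, v => by simp [wedge, contraction, symplecticContraction, contractLeft_one]
  | p + 1, v => by
    rw [wedge_succ, symplecticContraction_ι_mul, symplecticContraction_wedge, contraction_succ,
      add_comm]

theorem eqOn_exteriorPower_symplecticContraction {p : ℕ}
    {θ : ExteriorAlgebra ℂ (Fin n ⊕ Fin n → ℂ) →ₗ[ℂ] ExteriorAlgebra ℂ (Fin n ⊕ Fin n → ℂ)}
    (hθ : ∀ v : Fin p → Fin n ⊕ Fin n → ℂ, θ (wedge n v) = contraction n v) :
    Set.EqOn θ (symplecticContraction n) (⋀[ℂ]^p (Fin n ⊕ Fin n → ℂ)) := by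
  rw [← ιMulti_span_fixedDegree]
  refine LinearMap.eqOn_span' ?_
  rintro _ ⟨v, rfl⟩
  rw [ιMulti_eq_prod_map_ι, ← wedge, hθ, symplecticContraction_wedge]

end Symplectic

theorem W_eq_Wmin_on_fundamental_general (n p : ℕ) (hp1 : 1 ≤ p)
    (β : Fin n ⊕ Fin n → ℂ) (k : Fin n ⊕ Fin n → ℤ)
    (hk : (fun i => (k i : ℂ)) + β ≠ 0)
    (θ : ExteriorAlgebra ℂ (Fin n ⊕ Fin n → ℂ) →ₗ[ℂ] ExteriorAlgebra ℂ (Fin n ⊕ Fin n → ℂ))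
    (hθ : ∀ v : Fin p → (Fin n ⊕ Fin n → ℂ), θ (wedge n v) = contraction n v)
    (D : ExteriorAlgebra ℂ (Fin n ⊕ Fin n → ℂ) →ₗ[ℂ] ExteriorAlgebra ℂ (Fin n ⊕ Fin n → ℂ))
    (hD1 : ∀ a b, D (a * b) = D a * b + a * D b)
    (hD2 : ∀ u : Fin n ⊕ Fin n → ℂ, D (ExteriorAlgebra.ι ℂ u) =
      ExteriorAlgebra.ι ℂ
        ((Matrix.vecMulVec ((fun i => (k i : ℂ)) + β)
          ((Jmat n).mulVec ((fun i => (k i : ℂ)) + β))).mulVec u)) :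
    ∀ x ∈ ⋀[ℂ]^p (Fin n ⊕ Fin n → ℂ), θ x = 0 →
      (∃ y ∈ ⋀[ℂ]^(p-1) (Fin n ⊕ Fin n → ℂ),
        x = ExteriorAlgebra.ι ℂ ((fun i => (k i : ℂ)) + β) * y) →
      ∃ w ∈ ⋀[ℂ]^p (Fin n ⊕ Fin n → ℂ), θ w = 0 ∧ D w = x := by
  rintro x hx hθx ⟨y, -, hxy⟩
  set α := (fun i => (k i : ℂ)) + β
  obtain ⟨q, rfl⟩ : ∃ q, p = q + 1 := ⟨p - 1, by omega⟩
  have hθΘ := eqOn_exteriorPower_symplecticContraction hθ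
  have hD : ∀ z, D z = ExteriorAlgebra.ι ℂ α * contractLeft (symplecticForm n α) z :=
    ExteriorAlgebra.derivation_eq_ι_mul_contractLeft D hD1 _ α fun u => by
      rw [hD2, vecMulVec_mulVec, op_smul_eq_smul, map_smul]
      rfl
  have hαx : ExteriorAlgebra.ι ℂ α * x = 0 := by
    rw [hxy, ← mul_assoc, ExteriorAlgebra.ι_sq_zero, zero_mul]
  obtain ⟨b, hαb⟩ := exists_symplecticForm_eq_one hk
  have hbα : symplecticForm n b α = -1 := by rw [symplecticForm_swap, hαb]
  obtain ⟨w, hw, hΘw, hDw⟩ :=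
    ExteriorAlgebra.exists_mem_exteriorPower_map_eq_zero_ι_mul_contractLeft_eq (symplecticForm n)
      (symplecticContraction n) symplecticContraction_ι_mul contractLeft_symplecticContraction
      hαb hbα hx hαx (hθΘ hx ▸ hθx)
  exact ⟨w, hw, hθΘ hw ▸ hΘw, (hD w).trans hDw⟩

/-- Let `β ∈ ℂ^N`, `k ∈ ℤ^N` with `k+β ≠ 0`, `N = 2n`, `1 ≤ p ≤ n`. Every element of
`(k+β) ∧ Λ^{p-1} ℂ^N` lying in the kernel of the contraction `θ_p` is of the form
`(k+β)(overline{k+β})^T w` for some `w ∈ ker θ_p`; that is,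
`W^{k,β}(V(ω_p)) = W_min^{k,β}(V(ω_p))`. -/
theorem W_eq_Wmin_on_fundamental (n p : ℕ) (hp1 : 1 ≤ p) (hpn : p ≤ n)
    (β : Fin n ⊕ Fin n → ℂ) (k : Fin n ⊕ Fin n → ℤ)
    (hk : (fun i => (k i : ℂ)) + β ≠ 0)
    (θ : ExteriorAlgebra ℂ (Fin n ⊕ Fin n → ℂ) →ₗ[ℂ] ExteriorAlgebra ℂ (Fin n ⊕ Fin n → ℂ))
    (hθ : ∀ v : Fin p → (Fin n ⊕ Fin n → ℂ), θ (wedge n v) = contraction n v)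
    (D : ExteriorAlgebra ℂ (Fin n ⊕ Fin n → ℂ) →ₗ[ℂ] ExteriorAlgebra ℂ (Fin n ⊕ Fin n → ℂ))
    (hD1 : ∀ a b, D (a * b) = D a * b + a * D b)
    (hD2 : ∀ u : Fin n ⊕ Fin n → ℂ, D (ExteriorAlgebra.ι ℂ u) =
      ExteriorAlgebra.ι ℂ
        ((Matrix.vecMulVec ((fun i => (k i : ℂ)) + β)
          ((Jmat n).mulVec ((fun i => (k i : ℂ)) + β))).mulVec u)) :
    ∀ x ∈ ⋀[ℂ]^p (Fin n ⊕ Fin n → ℂ), θ x = 0 →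
      (∃ y ∈ ⋀[ℂ]^(p-1) (Fin n ⊕ Fin n → ℂ),
        x = ExteriorAlgebra.ι ℂ ((fun i => (k i : ℂ)) + β) * y) →
      ∃ w ∈ ⋀[ℂ]^p (Fin n ⊕ Fin n → ℂ), θ w = 0 ∧ D w = x :=
  W_eq_Wmin_on_fundamental_general n p hp1 β k hk θ hθ D hD1 hD2
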